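/- If M ∈ M_N(ℂ) is Hermitian with eigenvalues a₁ ≤ … ≤ a_N and a_{N-k+1} < a_k, then Λ_k(M) is empty. -/

import Mathlib

/-! If `P` is a rank-`k` orthogonal projection with `P M P = c P`, then `u* M u = c ‖u‖²` for every
`u` in the range of `P`. By counting dimensions, that range meets the span of any `N - k + 1`
orthonormal eigenvectors of `M` in a nonzero vector, and on such a span the Rayleigh quotient of
`M` is a convex combination of the corresponding eigenvalues. The eigenvectors for
`a₁, …, a_{N-k+1}` thus give `c ≤ a_{N-k+1}`, and those for `a_k, …, a_N` give `a_k ≤ c`. -/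

open Matrix BigOperators Finset

noncomputable section

/-- Numerical range of a complex matrix. -/
def NumRange {n : ℕ} (M : Matrix (Fin n) (Fin n) ℂ) : Set ℂ :=
  { c | ∃ u : Fin n → ℂ, star u ⬝ᵥ u = 1 ∧ star u ⬝ᵥ M.mulVec u = c }

/-- `C` is a rank-`k` compression of `M`: `C` represents `P_S M |_S` in some
orthonormal basis of a `k`-dimensional subspace `S`. -/
def IsCompression {N k : ℕ} (M : Matrix (Fin N) (Fin N) ℂ)
    (C : Matrix (Fin k) (Fin k) ℂ) : Prop :=
  ∃ f : Fin k → (Fin N → ℂ),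
    (∀ i j, star (f i) ⬝ᵥ f j = if i = j then 1 else 0) ∧
    (∀ i j, C i j = star (f i) ⬝ᵥ M.mulVec (f j))

/-- `diag(a,b)` is a compression of `M`. -/
def IsDiagCompression {N : ℕ} (M : Matrix (Fin N) (Fin N) ℂ) (a b : ℂ) : Prop :=
  ∃ u w : Fin N → ℂ,
    star u ⬝ᵥ u = 1 ∧ star w ⬝ᵥ w = 1 ∧ star u ⬝ᵥ w = 0 ∧
    star u ⬝ᵥ M.mulVec u = a ∧ star w ⬝ᵥ M.mulVec w = b ∧
    star u ⬝ᵥ M.mulVec w = 0 ∧ star w ⬝ᵥ M.mulVec u = 0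

/-- The rank-`k` numerical range `Λ_k(M)`. -/
def rankNumRange {N : ℕ} (k : ℕ) (M : Matrix (Fin N) (Fin N) ℂ) : Set ℂ :=
  { c | ∃ P : Matrix (Fin N) (Fin N) ℂ,
      P.IsHermitian ∧ P * P = P ∧ P.rank = k ∧ P * M * P = c • P }

/-- `M` has an orthonormal basis of eigenvectors with eigenvalue list `z`. -/
def HasONEigenbasis {N : ℕ} (M : Matrix (Fin N) (Fin N) ℂ) (z : Fin N → ℂ) : Prop :=
  ∃ f : Fin N → (Fin N → ℂ),
    (∀ i j, star (f i) ⬝ᵥ f j = if i = j then 1 else 0) ∧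
    (∀ j, M.mulVec (f j) = z j • f j)

/-- 2D cross product of complex numbers viewed as plane vectors. -/
def cross2 (p q : ℂ) : ℝ := p.re * q.im - p.im * q.re

section Projection

variable {n : Type*} [Fintype n] {P : Matrix n n ℂ}

theorem exists_ne_zero_mulVec_eq_self_of_lt_rank_add_finrank (hP2 : P * P = P)
    {S : Submodule ℂ (n → ℂ)} (hS : Fintype.card n < P.rank + Module.finrank ℂ S) :
    ∃ u ∈ S, u ≠ 0 ∧ P *ᵥ u = u := by
  by_contra! hfix
  have hdisj : Disjoint (LinearMap.range P.mulVecLin) S := by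
    refine Submodule.disjoint_def.mpr fun u ⟨v, hv⟩ huS => by_contra fun hu => hfix u huS hu ?_
    rw [← hv, mulVecLin_apply, mulVec_mulVec, hP2]
  have hdim := Submodule.finrank_add_finrank_le_of_disjoint hdisj
  rw [Module.finrank_fintype_fun_eq_card] at hdim
  exact (not_lt.mpr hdim) hS

theorem star_dotProduct_mulVec_eq_of_mulVec_eq_self (hP : P.IsHermitian) {M : Matrix n n ℂ}
    {c : ℂ} (hPMP : P * M * P = c • P) {u : n → ℂ} (hPu : P *ᵥ u = u) :
    star u ⬝ᵥ M *ᵥ u = c * (star u ⬝ᵥ u) := by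
  conv_lhs => rw [← hPu, star_mulVec, ← dotProduct_mulVec, mulVec_mulVec, mulVec_mulVec,
    hP.eq, hPMP, smul_mulVec, dotProduct_smul, smul_eq_mul, hPu]

end Projection

section OrthonormalFamily

variable {n ι : Type*} [Fintype n] [Fintype ι] [DecidableEq ι] {f : ι → n → ℂ}

theorem star_dotProduct_sum_smul_of_orthonormal
    (hf : ∀ i j, star (f i) ⬝ᵥ f j = if i = j then 1 else 0) (j : ι) (c : ι → ℂ) :
    star (f j) ⬝ᵥ ∑ i, c i • f i = c j := by
  simp [dotProduct_sum, dotProduct_smul, hf]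

theorem star_sum_smul_dotProduct_sum_smul_of_orthonormal
    (hf : ∀ i j, star (f i) ⬝ᵥ f j = if i = j then 1 else 0) (c d : ι → ℂ) :
    star (∑ i, c i • f i) ⬝ᵥ ∑ j, d j • f j = ∑ i, star (c i) * d i := by
  simp [star_sum, sum_dotProduct, smul_dotProduct, star_dotProduct_sum_smul_of_orthonormal hf]

theorem linearIndependent_of_orthonormal
    (hf : ∀ i j, star (f i) ⬝ᵥ f j = if i = j then 1 else 0) : LinearIndependent ℂ f := by
  rw [Fintype.linearIndependent_iff]
  intro c hc j
  simpa [hc] using (star_dotProduct_sum_smul_of_orthonormal hf j c).symm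

theorem star_sum_smul_dotProduct_self_of_orthonormal
    (hf : ∀ i j, star (f i) ⬝ᵥ f j = if i = j then 1 else 0) (c : ι → ℂ) :
    star (∑ i, c i • f i) ⬝ᵥ ∑ i, c i • f i = ((∑ i, Complex.normSq (c i) : ℝ) : ℂ) := by
  rw [star_sum_smul_dotProduct_sum_smul_of_orthonormal hf]
  push_cast
  simp [Complex.normSq_eq_conj_mul_self]

theorem star_sum_smul_dotProduct_mulVec_of_orthonormal_eigenvectors
    (hf : ∀ i j, star (f i) ⬝ᵥ f j = if i = j then 1 else 0) {M : Matrix n n ℂ} {a : ι → ℝ}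
    (heig : ∀ i, M *ᵥ f i = (a i : ℂ) • f i) (c : ι → ℂ) :
    star (∑ i, c i • f i) ⬝ᵥ M *ᵥ ∑ i, c i • f i =
      ((∑ i, Complex.normSq (c i) * a i : ℝ) : ℂ) := by
  have hMu : M *ᵥ ∑ i, c i • f i = ∑ i, (a i * c i) • f i := by
    simp only [mulVec_sum, mulVec_smul, heig, smul_smul, mul_comm]
  rw [hMu, star_sum_smul_dotProduct_sum_smul_of_orthonormal hf]
  push_cast
  refine Finset.sum_congr rfl fun i _ => ?_
  rw [Complex.normSq_eq_conj_mul_self]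
  simp only [Complex.star_def]
  ring

end OrthonormalFamily

theorem exists_mem_convexHull_eq_of_mem_rankNumRange {N k : ℕ} {ι : Type*} [Fintype ι]
    [DecidableEq ι] {M : Matrix (Fin N) (Fin N) ℂ} {f : ι → Fin N → ℂ} {a : ι → ℝ}
    (hf : ∀ i j, star (f i) ⬝ᵥ f j = if i = j then 1 else 0)
    (heig : ∀ i, M *ᵥ f i = (a i : ℂ) • f i) (hcard : N < k + Fintype.card ι)
    {c : ℂ} (hc : c ∈ rankNumRange k M) :
    ∃ x ∈ convexHull ℝ (Set.range a), c = x := by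
  obtain ⟨P, hP, hP2, hrank, hPMP⟩ := hc
  have hspan : Module.finrank ℂ (Submodule.span ℂ (Set.range f)) = Fintype.card ι :=
    finrank_span_eq_card (linearIndependent_of_orthonormal hf)
  obtain ⟨u, huS, hu0, hPu⟩ := exists_ne_zero_mulVec_eq_self_of_lt_rank_add_finrank hP2
    (S := Submodule.span ℂ (Set.range f)) (by rw [hspan, hrank, Fintype.card_fin]; exact hcard)
  obtain ⟨d, rfl⟩ := (Submodule.mem_span_range_iff_exists_fun ℂ).mp huS
  set w : ι → ℝ := fun i => Complex.normSq (d i)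
  have hw : 0 < ∑ i, w i := by
    obtain ⟨i, hi⟩ : ∃ i, d i ≠ 0 := by
      by_contra! hd
      exact hu0 (by simp [hd])
    exact Finset.sum_pos' (fun j _ => Complex.normSq_nonneg _)
      ⟨i, Finset.mem_univ i, Complex.normSq_pos.mpr hi⟩
  have hquot := star_dotProduct_mulVec_eq_of_mulVec_eq_self hP hPMP hPu
  rw [star_sum_smul_dotProduct_mulVec_of_orthonormal_eigenvectors hf heig,
    star_sum_smul_dotProduct_self_of_orthonormal hf] at hquot
  refine ⟨Finset.univ.centerMass w a, Finset.univ.centerMass_mem_convexHull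
    (fun i _ => Complex.normSq_nonneg _) hw fun i _ => Set.mem_range_self i, ?_⟩
  have hw' : ((∑ i, w i : ℝ) : ℂ) ≠ 0 := by exact_mod_cast hw.ne'
  rw [Finset.centerMass, smul_eq_mul, Complex.ofReal_mul, Complex.ofReal_inv,
    eq_inv_mul_iff_mul_eq₀ hw', mul_comm]
  simpa only [smul_eq_mul] using hquot.symm

theorem exists_mem_convexHull_image_eq_of_mem_rankNumRange {N k : ℕ}
    {M : Matrix (Fin N) (Fin N) ℂ} {a : Fin N → ℝ} (heig : HasONEigenbasis M (fun j => (a j : ℂ)))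
    (t : Finset (Fin N)) (hcard : N < k + t.card) {c : ℂ} (hc : c ∈ rankNumRange k M) :
    ∃ x ∈ convexHull ℝ (a '' t), c = x := by
  obtain ⟨f, hf, hfeig⟩ := heig
  rw [Set.image_eq_range]
  exact exists_mem_convexHull_eq_of_mem_rankNumRange (f := fun i : t => f i)
    (fun i j => (hf i j).trans (if_congr Subtype.ext_iff.symm rfl rfl))
    (fun i => hfeig i) (by simpa using hcard) hc

theorem stmt_5 {N k : ℕ} (hk : 1 ≤ k) (hkN : k ≤ N)
    (M : Matrix (Fin N) (Fin N) ℂ)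
    (a : Fin N → ℝ) (ha : Monotone a)
    (heig : HasONEigenbasis M (fun j => (a j : ℂ)))
    (hlt : a ⟨N - k, by omega⟩ < a ⟨k - 1, by omega⟩) :
    rankNumRange k M = ∅ := by
  refine Set.eq_empty_iff_forall_notMem.mpr fun c hc => ?_
  obtain ⟨x, hx, rfl⟩ := exists_mem_convexHull_image_eq_of_mem_rankNumRange heig
    (Finset.Iic ⟨N - k, by omega⟩) (by simp only [Fin.card_Iic]; omega) hc
  obtain ⟨y, hy, hxy⟩ := exists_mem_convexHull_image_eq_of_mem_rankNumRange heig
    (Finset.Ici ⟨k - 1, by omega⟩) (by simp only [Fin.card_Ici]; omega) hc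
  have hx_le : x ≤ a ⟨N - k, by omega⟩ := convexHull_min
    (by rintro _ ⟨j, hj, rfl⟩; exact ha (Finset.mem_Iic.mp hj)) (convex_Iic _) hx
  have hy_ge : a ⟨k - 1, by omega⟩ ≤ y := convexHull_min
    (by rintro _ ⟨j, hj, rfl⟩; exact ha (Finset.mem_Ici.mp hj)) (convex_Ici _) hy
  have : x = y := Complex.ofReal_inj.mp hxy
  linarith
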